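/- arXiv:1807.04839 — 2 statements merged into one kernel-verified Lean document; each statement's English description precedes it below -/
import Mathlib

section
/- Suppose λ² > 0 satisfies the AMP-SI fixed point equation λ² = σ_z² + (1/δ) E[(E[X | X + λ̃ Z] − X)²] where λ̃² = λ²σ̂²/(σ̂² + λ²). Then λ̃² satisfies λ̃² = σ_eff² + (1/δ_eff) E[(E[X | X + λ̃ Z] − X)²], where δ_eff = δ(σ̂² + λ²)/σ̂² and σ_eff² = σ_z² σ̂²/(σ̂² + λ²); i.e., the fixed points of AMP-SI state evolution coincide with the fixed points of standard AMP state evolution with effective measurement rate δ_eff ≥ δ and effective noise variance σ_eff² ≤ σ_z². -/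
open Real MeasureTheory ProbabilityTheory

/-- Fixed points of AMP-SI state evolution with Gaussian side information coincide with
fixed points of standard AMP state evolution with effective measurement rate
`δ_eff = δ(σ̂² + λ²)/σ̂² ≥ δ` and effective noise variance
`σ_eff² = σ_z²σ̂²/(σ̂² + λ²) ≤ σ_z²`. -/
theorem amp_si_fixed_point_equivalence {Ω : Type*} [MeasurableSpace Ω] (P : Measure Ω)
    [IsProbabilityMeasure P] (X Z : Ω → ℝ)
    (hmX : Measurable X) (hmZ : Measurable Z)
    (hX2 : Integrable (fun ω => X ω ^ 2) P)
    (hZ : Measure.map Z P = gaussianReal 0 1)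
    (hindep : IndepFun X Z P)
    (δ σz2 σh2 lam2 : ℝ) (hδ : 0 < δ) (hσz2 : 0 ≤ σz2) (hσh2 : 0 < σh2) (hlam2 : 0 < lam2)
    (m : ℝ)
    (hm : m = ∫ ω, ((P[X | MeasurableSpace.comap
        (fun ω' => X ω' + Real.sqrt (lam2 * σh2 / (σh2 + lam2)) * Z ω') inferInstance]) ω
          - X ω) ^ 2 ∂P)
    (hfix : lam2 = σz2 + (1 / δ) * m) :
    lam2 * σh2 / (σh2 + lam2) =
        σz2 * σh2 / (σh2 + lam2) + (1 / (δ * (σh2 + lam2) / σh2)) * m ∧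
      δ ≤ δ * (σh2 + lam2) / σh2 ∧
      σz2 * σh2 / (σh2 + lam2) ≤ σz2 := by
  have hs : 0 < σh2 + lam2 := by linarith
  have hm' : m = δ * (lam2 - σz2) := by
    field_simp at hfix; linarith
  refine ⟨?_, ?_, ?_⟩
  · rw [hm']; field_simp; ring
  · rw [le_div_iff₀ hσh2]; nlinarith
  · rw [div_le_iff₀ hs]; nlinarith
end

section
/- In the Bernoulli-Gaussian model, the MMSE denoiser with side information η(a,b) = E[X | X + N(0,λ_t²) = a, X + N(0,σ̂²) = b] equals (1 + R_{(a,b)})⁻¹ · (a σ̂² + b λ_t²)/(σ̂² + λ_t² + σ̂² λ_t²), where R_{(a,b)} is the likelihood ratio between the zero and nonzero hypotheses. -/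
open Real MeasureTheory ProbabilityTheory

/-- Zero-mean Gaussian density with variance `v`. -/
noncomputable def psi (v x : ℝ) : ℝ :=
  (Real.sqrt (2 * Real.pi * v))⁻¹ * Real.exp (-x ^ 2 / (2 * v))

/-- The Bernoulli-Gaussian prior: `X = 0` w.p. `1 − ε` and `X ~ N(0,1)` w.p. `ε`. -/
noncomputable def bgPrior (ε : ℝ) : Measure ℝ :=
  ENNReal.ofReal (1 - ε) • Measure.dirac (0 : ℝ) + ENNReal.ofReal ε • gaussianReal 0 1

lemma psi_nonneg (v x : ℝ) : 0 ≤ psi v x := by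
  unfold psi; positivity

lemma psi_pos {v : ℝ} (hv : 0 < v) (x : ℝ) : 0 < psi v x := by
  unfold psi
  have : 0 < Real.sqrt (2 * Real.pi * v) := Real.sqrt_pos.mpr (by positivity)
  positivity

lemma pdf01 (x : ℝ) : gaussianPDFReal 0 1 x = psi 1 x := by
  simp [gaussianPDFReal, psi]

lemma integral_gauss01 (f : ℝ → ℝ) :
    ∫ x, f x ∂gaussianReal 0 1 = ∫ x, psi 1 x * f x := by
  rw [gaussianReal_of_var_ne_zero 0 one_ne_zero, gaussianPDF_def]
  simp_rw [ENNReal.ofReal]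
  rw [integral_withDensity_eq_integral_smul ((measurable_gaussianPDFReal 0 1).real_toNNReal)]
  congr 1
  ext x
  simp only [NNReal.smul_def, smul_eq_mul, pdf01, Real.coe_toNNReal _ (psi_nonneg 1 x)]

lemma integrable_gauss01_iff (f : ℝ → ℝ) :
    Integrable f (gaussianReal 0 1) ↔ Integrable (fun x => psi 1 x * f x) := by
  rw [gaussianReal_of_var_ne_zero 0 one_ne_zero, gaussianPDF_def]
  simp_rw [ENNReal.ofReal]
  rw [integrable_withDensity_iff_integrable_smul ((measurable_gaussianPDFReal 0 1).real_toNNReal)]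
  constructor <;> intro h <;> refine h.congr (Filter.Eventually.of_forall fun x => ?_) <;>
    simp only [NNReal.smul_def, smul_eq_mul, pdf01, Real.coe_toNNReal _ (psi_nonneg 1 x)]

lemma int_exp_shift {p : ℝ} (hp : 0 < p) (m : ℝ) :
    ∫ x : ℝ, Real.exp (-p * (x - m) ^ 2) = Real.sqrt (π / p) := by
  rw [integral_sub_right_eq_self (fun x : ℝ => Real.exp (-p * x ^ 2)) m]
  exact integral_gaussian p

lemma int_x_exp (p : ℝ) :
    ∫ x : ℝ, x * Real.exp (-p * x ^ 2) = 0 := by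
  have h1 : ∫ x : ℝ, (-x) * Real.exp (-p * (-x) ^ 2) = ∫ x : ℝ, x * Real.exp (-p * x ^ 2) :=
    integral_neg_eq_self (fun x : ℝ => x * Real.exp (-p * x ^ 2)) volume
  simp only [neg_sq, neg_mul] at h1 ⊢
  rw [integral_neg] at h1
  linarith

lemma int_x_exp_shift {p : ℝ} (hp : 0 < p) (m : ℝ) :
    ∫ x : ℝ, x * Real.exp (-p * (x - m) ^ 2) = m * Real.sqrt (π / p) := by
  have h0 := integral_add_right_eq_self (μ := volume)
    (fun x : ℝ => x * Real.exp (-p * (x - m) ^ 2)) m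
  simp only [add_sub_cancel_right] at h0
  rw [← h0]
  have hi1 : Integrable (fun x : ℝ => x * Real.exp (-p * x ^ 2)) :=
    integrable_mul_exp_neg_mul_sq hp
  have hi2 : Integrable (fun x : ℝ => m * Real.exp (-p * x ^ 2)) :=
    (integrable_exp_neg_mul_sq hp).const_mul m
  calc ∫ x : ℝ, (x + m) * Real.exp (-p * x ^ 2)
      = ∫ x : ℝ, (x * Real.exp (-p * x ^ 2) + m * Real.exp (-p * x ^ 2)) := by
        congr 1; ext x; ring
    _ = (∫ x : ℝ, x * Real.exp (-p * x ^ 2)) + ∫ x : ℝ, m * Real.exp (-p * x ^ 2) :=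
        integral_add hi1 hi2
    _ = m * Real.sqrt (π / p) := by
        rw [int_x_exp p, integral_const_mul, integral_gaussian]; ring

lemma integrable_x_exp_shift {p : ℝ} (hp : 0 < p) (m : ℝ) :
    Integrable (fun x : ℝ => x * Real.exp (-p * (x - m) ^ 2)) := by
  have hg : Integrable (fun y : ℝ => (y + m) * Real.exp (-p * y ^ 2)) := by
    refine ((integrable_mul_exp_neg_mul_sq hp).add
      ((integrable_exp_neg_mul_sq hp).const_mul m)).congr
      (Filter.Eventually.of_forall fun y => ?_)
    simp only [Pi.add_apply]
    ring
  have := hg.comp_sub_right m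
  refine this.congr (Filter.Eventually.of_forall fun x => ?_)
  simp [sub_add_cancel]

lemma integral_bgPrior {ε : ℝ} (hε0 : 0 ≤ ε) (hε1 : ε ≤ 1) {f : ℝ → ℝ}
    (hm : StronglyMeasurable f) (hf : Integrable f (gaussianReal 0 1)) :
    ∫ x, f x ∂bgPrior ε = (1 - ε) * f 0 + ε * ∫ x, f x ∂gaussianReal 0 1 := by
  have hd : Integrable f (Measure.dirac (0 : ℝ)) := by
    refine (integrable_const (f 0)).congr ?_
    rw [MeasureTheory.ae_dirac_eq]
    exact Filter.eventually_pure.2 rfl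
  rw [bgPrior, integral_add_measure (hd.smul_measure ENNReal.ofReal_ne_top)
      (hf.smul_measure ENNReal.ofReal_ne_top),
    integral_smul_measure, integral_smul_measure, integral_dirac,
    ENNReal.toReal_ofReal (by linarith), ENNReal.toReal_ofReal hε0]
  simp [smul_eq_mul]

set_option maxHeartbeats 2000000

/-- The Bernoulli-Gaussian MMSE denoiser with side information: the posterior mean of `X`
given pseudo-data `a` (noise variance `λ_t²`) and side information `b` (noise variance `σ̂²`)
equals `(1 + R)⁻¹ (aσ̂² + bλ_t²)/(σ̂² + λ_t² + σ̂²λ_t²)`. -/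
theorem bg_denoiser (ε vlam vσh : ℝ) (hε : 0 < ε) (hε1 : ε < 1)
    (hvlam : 0 < vlam) (hvσh : 0 < vσh) (a b : ℝ) :
    (∫ x, x * psi vlam (a - x) * psi vσh (b - x) ∂bgPrior ε) /
        (∫ x, psi vlam (a - x) * psi vσh (b - x) ∂bgPrior ε) =
      (1 + (1 - ε) * psi vlam a * psi vσh b /
          (ε * psi (1 + vσh) b * psi (vσh / (1 + vσh) + vlam) (b / (1 + vσh) - a)))⁻¹ *
        ((a * vσh + b * vlam) / (vσh + vlam + vσh * vlam)) := by
  have hπ := Real.pi_pos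
  have hmul := mul_pos hvσh hvlam
  have hSpos : (0 : ℝ) < vσh + vlam + vσh * vlam := by linarith
  set S : ℝ := vσh + vlam + vσh * vlam with hSdef
  have hp : (0 : ℝ) < S / (2 * vlam * vσh) := by positivity
  set p : ℝ := S / (2 * vlam * vσh) with hpdef
  set m : ℝ := (a * vσh + b * vlam) / S with hmdef
  set c : ℝ := a ^ 2 / (2 * vlam) + b ^ 2 / (2 * vσh) - p * m ^ 2 with hcdef
  set K : ℝ := (Real.sqrt (2 * π * 1))⁻¹ * (Real.sqrt (2 * π * vlam))⁻¹ *
      (Real.sqrt (2 * π * vσh))⁻¹ * Real.exp (-c) with hKdef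
  clear_value S p m c K
  have hKpos : 0 < K := by
    rw [hKdef]
    have h1 : 0 < Real.sqrt (2 * π * 1) := Real.sqrt_pos.mpr (by positivity)
    have h2 : 0 < Real.sqrt (2 * π * vlam) := Real.sqrt_pos.mpr (by positivity)
    have h3 : 0 < Real.sqrt (2 * π * vσh) := Real.sqrt_pos.mpr (by positivity)
    positivity
  -- pointwise combination of the three Gaussian densities
  have key : ∀ x : ℝ, psi 1 x * (psi vlam (a - x) * psi vσh (b - x))
      = K * Real.exp (-p * (x - m) ^ 2) := by
    intro x
    have hexp : -x ^ 2 / (2 * 1) + (-(a - x) ^ 2 / (2 * vlam) + -(b - x) ^ 2 / (2 * vσh))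
        = -c + -p * (x - m) ^ 2 := by
      rw [hcdef, hpdef, hmdef, hSdef]
      field_simp
      ring
    calc psi 1 x * (psi vlam (a - x) * psi vσh (b - x))
        = (Real.sqrt (2 * π * 1))⁻¹ * (Real.sqrt (2 * π * vlam))⁻¹ *
            (Real.sqrt (2 * π * vσh))⁻¹ *
            Real.exp (-x ^ 2 / (2 * 1) + (-(a - x) ^ 2 / (2 * vlam) + -(b - x) ^ 2 / (2 * vσh))) := by
          simp only [psi, Real.exp_add]; ring
      _ = K * Real.exp (-p * (x - m) ^ 2) := by
          rw [hexp, Real.exp_add, hKdef]; ring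
  have hcont : Continuous fun x : ℝ => psi vlam (a - x) * psi vσh (b - x) := by
    unfold psi; fun_prop
  -- integrability
  have hiden : Integrable (fun x => psi vlam (a - x) * psi vσh (b - x)) (gaussianReal 0 1) := by
    rw [integrable_gauss01_iff]
    have h1 : Integrable (fun x : ℝ => K * Real.exp (-p * (x - m) ^ 2)) :=
      ((integrable_exp_neg_mul_sq hp).comp_sub_right m).const_mul K
    exact h1.congr (Filter.Eventually.of_forall fun x => (key x).symm)
  have keyx : ∀ x : ℝ, psi 1 x * (x * psi vlam (a - x) * psi vσh (b - x))
      = K * (x * Real.exp (-p * (x - m) ^ 2)) := by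
    intro x
    calc psi 1 x * (x * psi vlam (a - x) * psi vσh (b - x))
        = x * (psi 1 x * (psi vlam (a - x) * psi vσh (b - x))) := by ring
      _ = x * (K * Real.exp (-p * (x - m) ^ 2)) := by rw [key x]
      _ = K * (x * Real.exp (-p * (x - m) ^ 2)) := by ring
  have hinum : Integrable (fun x => x * psi vlam (a - x) * psi vσh (b - x)) (gaussianReal 0 1) := by
    rw [integrable_gauss01_iff]
    have h1 : Integrable (fun x : ℝ => K * (x * Real.exp (-p * (x - m) ^ 2))) :=
      (integrable_x_exp_shift hp m).const_mul K
    exact h1.congr (Filter.Eventually.of_forall fun x => (keyx x).symm)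
  -- values of the Gaussian integrals
  have hgden : ∫ x, psi vlam (a - x) * psi vσh (b - x) ∂gaussianReal 0 1
      = K * Real.sqrt (π / p) := by
    rw [integral_gauss01]
    simp_rw [key]
    rw [integral_const_mul, int_exp_shift hp]
  have hgnum : ∫ x, x * psi vlam (a - x) * psi vσh (b - x) ∂gaussianReal 0 1
      = K * (m * Real.sqrt (π / p)) := by
    rw [integral_gauss01]
    simp_rw [keyx]
    rw [integral_const_mul, int_x_exp_shift hp]
  -- reduce the bgPrior integrals
  have hcont2 : Continuous fun x : ℝ => x * psi vlam (a - x) * psi vσh (b - x) := by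
    unfold psi; fun_prop
  rw [integral_bgPrior hε.le hε1.le hcont2.stronglyMeasurable hinum,
    integral_bgPrior hε.le hε1.le hcont.stronglyMeasurable hiden, hgnum, hgden]
  simp only [zero_mul, mul_zero, add_zero, sub_zero]
  -- the likelihood-ratio normalizing constant
  have h1σ : (0 : ℝ) < 1 + vσh := by linarith
  have hw : (0 : ℝ) < vσh / (1 + vσh) + vlam := by positivity
  have hC : psi (1 + vσh) b * psi (vσh / (1 + vσh) + vlam) (b / (1 + vσh) - a)
      = K * Real.sqrt (π / p) := by
    have hsq1 : 0 < Real.sqrt (2 * π * (1 + vσh)) := Real.sqrt_pos.mpr (by positivity)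
    have hsq2 : 0 < Real.sqrt (2 * π * (vσh / (1 + vσh) + vlam)) :=
      Real.sqrt_pos.mpr (by positivity)
    have hsq3 : 0 < Real.sqrt (2 * π * 1) := Real.sqrt_pos.mpr (by positivity)
    have hsq4 : 0 < Real.sqrt (2 * π * vlam) := Real.sqrt_pos.mpr (by positivity)
    have hsq5 : 0 < Real.sqrt (2 * π * vσh) := Real.sqrt_pos.mpr (by positivity)
    have hsq6 : 0 < Real.sqrt (π / p) := Real.sqrt_pos.mpr (div_pos hπ hp)
    have e1 : Real.sqrt (2 * π * (1 + vσh)) * Real.sqrt (2 * π * (vσh / (1 + vσh) + vlam)) *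
        Real.sqrt (π / p) = Real.sqrt (2 * π * 1) * (Real.sqrt (2 * π * vlam) *
        Real.sqrt (2 * π * vσh)) := by
      rw [← Real.sqrt_mul (by positivity), ← Real.sqrt_mul (by positivity),
        ← Real.sqrt_mul (by positivity), ← Real.sqrt_mul (by positivity)]
      congr 1
      rw [hpdef, hSdef]
      field_simp
      ring
    have hexp2 : Real.exp (-b ^ 2 / (2 * (1 + vσh))) *
        Real.exp (-(b / (1 + vσh) - a) ^ 2 / (2 * (vσh / (1 + vσh) + vlam))) = Real.exp (-c) := by
      rw [← Real.exp_add]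
      congr 1
      rw [hcdef, hpdef, hmdef, hSdef]
      field_simp
      ring
    calc psi (1 + vσh) b * psi (vσh / (1 + vσh) + vlam) (b / (1 + vσh) - a)
        = ((Real.sqrt (2 * π * (1 + vσh)))⁻¹ * (Real.sqrt (2 * π * (vσh / (1 + vσh) + vlam)))⁻¹) *
          (Real.exp (-b ^ 2 / (2 * (1 + vσh))) *
            Real.exp (-(b / (1 + vσh) - a) ^ 2 / (2 * (vσh / (1 + vσh) + vlam)))) := by
          simp only [psi]; ring
      _ = K * Real.sqrt (π / p) := by
          rw [hexp2, hKdef]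
          have h4 : (Real.sqrt (2 * π * (1 + vσh)))⁻¹ *
              (Real.sqrt (2 * π * (vσh / (1 + vσh) + vlam)))⁻¹
              = (Real.sqrt (2 * π * 1))⁻¹ * (Real.sqrt (2 * π * vlam))⁻¹ *
                (Real.sqrt (2 * π * vσh))⁻¹ * Real.sqrt (π / p) := by
            set A := Real.sqrt (2 * π * (1 + vσh))
            set B := Real.sqrt (2 * π * (vσh / (1 + vσh) + vlam))
            set C := Real.sqrt (2 * π * 1)
            set D := Real.sqrt (2 * π * vlam)
            set E := Real.sqrt (2 * π * vσh)
            set F := Real.sqrt (π / p)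
            have h3 : C * D * E = A * B * F := by linear_combination -e1
            field_simp
            linear_combination h3
          rw [h4]
          ring
  rw [show ε * psi (1 + vσh) b * psi (vσh / (1 + vσh) + vlam) (b / (1 + vσh) - a)
      = ε * (K * Real.sqrt (π / p)) by rw [mul_assoc, hC]]
  -- final algebra
  set F := Real.sqrt (π / p) with hFdef
  have hF : 0 < F := by rw [hFdef]; exact Real.sqrt_pos.mpr (div_pos hπ hp)
  clear_value F
  have hP : 0 < psi vlam a * psi vσh b := mul_pos (psi_pos hvlam a) (psi_pos hvσh b)
  have hQ : 0 < K * F := mul_pos hKpos hF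
  have hD : 0 < (1 - ε) * (psi vlam a * psi vσh b) + ε * (K * F) := by
    have := mul_pos hε hQ
    nlinarith
  have hR : 1 + (1 - ε) * psi vlam a * psi vσh b / (ε * (K * F))
      = ((1 - ε) * (psi vlam a * psi vσh b) + ε * (K * F)) / (ε * (K * F)) := by
    field_simp
    ring
  rw [hR, inv_div, div_mul_eq_mul_div, div_eq_div_iff hD.ne' hD.ne']
  ring
end
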